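/- Assume hypotheses (H1) and (H2), and assume Γ* > 0. Then the connected components X_□ and X_⊞ of X** are disjoint (hence disconnected in X**), and they admit the characterizations X_□ = {η ∈ X : Φ(η,□) < Φ(η,⊞) = Γ*} and X_⊞ = {η ∈ X : Φ(η,⊞) < Φ(η,□) = Γ*}. -/

import Mathlib

open scoped Classical

variable {X : Type*}

/-- `ω` (restricted to 0,…,L) is a path of allowed moves from `a` to `b`. -/
def IsPathW (rel : X → X → Prop) (a b : X) (L : ℕ) (ω : ℕ → X) : Prop :=
  ω 0 = a ∧ ω L = b ∧ ∀ i < L, rel (ω i) (ω (i + 1))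

/-- The maximal energy along the path `ω = (ω 0, …, ω L)`. -/
noncomputable def pathMax (H : X → ℝ) (L : ℕ) (ω : ℕ → X) : ℝ :=
  (Finset.range (L + 1)).sup' Finset.nonempty_range_add_one fun i => H (ω i)

/-- Communication height Φ(a,b) between two configurations. -/
noncomputable def commH (rel : X → X → Prop) (H : X → ℝ) (a b : X) : ℝ :=
  sInf { m : ℝ | ∃ L ω, IsPathW rel a b L ω ∧ m = pathMax H L ω }

/-- Communication height Φ(A,B) between two sets of configurations. -/
noncomputable def commHS (rel : X → X → Prop) (H : X → ℝ) (A B : Set X) : ℝ :=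
  sInf { m : ℝ | ∃ a ∈ A, ∃ b ∈ B, m = commH rel H a b }

/-- The graph (X,∼) is connected. -/
def ConnGraph (rel : X → X → Prop) : Prop :=
  ∀ a b : X, ∃ L ω, IsPathW rel a b L ω

/-- `a` and `b` are connected by a path staying inside `S`. -/
def connIn (rel : X → X → Prop) (S : Set X) (a b : X) : Prop :=
  ∃ L ω, IsPathW rel a b L ω ∧ ∀ i ≤ L, ω i ∈ S

/-- Γ* = Φ(□,⊞) − H(□). -/
noncomputable def gammaStar (rel : X → X → Prop) (H : X → ℝ) (a b : X) : ℝ :=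
  commH rel H a b - H a

/-- X** = {η : H(η) < Γ*}. -/
noncomputable def Xss (rel : X → X → Prop) (H : X → ℝ) (a b : X) : Set X :=
  {η : X | H η < gammaStar rel H a b}

/-- The connected component of X** containing `root`. -/
noncomputable def compOf (rel : X → X → Prop) (H : X → ℝ) (a b root : X) : Set X :=
  {η : X | connIn rel (Xss rel H a b) root η}

/-!
`Φ(a, b) < t` holds exactly when `a` and `b` are joined by a path inside `{H < t}`. Such paths can
be reversed and concatenated, so `Φ` is symmetric and satisfies the ultrametric inequality
`Φ(a, c) ≤ max (Φ(a, b)) (Φ(b, c))`, and the component of `X**` through `a` is the open `Φ`-ball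
of radius `Γ*` about `a`. Since `H(□) = 0`, `Γ* = Φ(□, ⊞)`, and the claims become facts about
ultrametric balls: if `Φ(a, b) = r`, the open `r`-balls about `a` and `b` are disjoint, and the one
about `a` consists of the points `η` with `Φ(η, a) < Φ(η, b) = r`.
-/

open Relation

section Paths

variable (rel : X → X → Prop) (S : Set X)

def relIn (x y : X) : Prop :=
  rel x y ∧ x ∈ S ∧ y ∈ S

variable {rel S}

lemma connIn_iff_reflTransGen {a b : X} :
    connIn rel S a b ↔ a ∈ S ∧ ReflTransGen (relIn rel S) a b := by
  constructor
  · rintro ⟨L, ω, ⟨rfl, rfl, hstep⟩, hmem⟩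
    refine ⟨hmem 0 L.zero_le, ?_⟩
    suffices ∀ i ≤ L, ReflTransGen (relIn rel S) (ω 0) (ω i) from this L le_rfl
    intro i hi
    induction i with
    | zero => exact .refl
    | succ i ih =>
      exact (ih (by omega)).tail ⟨hstep i hi, hmem i (by omega), hmem (i + 1) hi⟩
  · rintro ⟨ha, hab⟩
    induction hab with
    | refl => exact ⟨0, fun _ => a, ⟨rfl, rfl, by simp⟩, fun _ _ => ha⟩
    | @tail b c _ hbc ih =>
      obtain ⟨L, ω, ⟨h0, hL, hstep⟩, hmem⟩ := ih
      refine ⟨L + 1, fun i => if i ≤ L then ω i else c, ⟨by simpa using h0, by simp, ?_⟩, ?_⟩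
      · intro i hi
        rcases Nat.lt_succ_iff_lt_or_eq.mp hi with hi | rfl
        · simpa [hi.le, Nat.succ_le_of_lt hi] using hstep i hi
        · simpa [hL] using hbc.1
      · intro i hi
        dsimp only
        split_ifs with h
        exacts [hmem i h, hbc.2.2]

lemma connIn.trans {a b c : X} (hab : connIn rel S a b) (hbc : connIn rel S b c) :
    connIn rel S a c := by
  rw [connIn_iff_reflTransGen] at *
  exact ⟨hab.1, hab.2.trans hbc.2⟩

lemma Relation.ReflTransGen.mem_of_relIn {a b : X} (ha : a ∈ S) (hab : ReflTransGen (relIn rel S) a b) :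
    b ∈ S := by
  rcases hab.cases_tail with rfl | ⟨_, _, hcb⟩
  exacts [ha, hcb.2.2]

lemma connIn.symm (hsymm : Symmetric rel) {a b : X} (hab : connIn rel S a b) :
    connIn rel S b a := by
  rw [connIn_iff_reflTransGen] at *
  have hswap : ReflTransGen (relIn rel S) b a :=
    ReflTransGen.mono (fun x y h => ⟨hsymm h.1, h.2.2, h.2.1⟩) b a (ReflTransGen.swap _ _ hab.2)
  exact ⟨hab.2.mem_of_relIn hab.1, hswap⟩

end Paths

section CommunicationHeight

variable {rel : X → X → Prop} {H : X → ℝ}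

lemma le_pathMax {L : ℕ} (ω : ℕ → X) {i : ℕ} (hi : i ≤ L) : H (ω i) ≤ pathMax H L ω :=
  Finset.le_sup' (fun j => H (ω j)) (Finset.mem_range.mpr (Nat.lt_succ_of_le hi))

lemma exists_pathMax_eq (L : ℕ) (ω : ℕ → X) : ∃ i ≤ L, pathMax H L ω = H (ω i) := by
  obtain ⟨i, hi, h⟩ := Finset.exists_mem_eq_sup' Finset.nonempty_range_add_one fun i => H (ω i)
  exact ⟨i, Nat.lt_succ_iff.mp (Finset.mem_range.mp hi), h⟩

variable [Finite X]

lemma finite_setOf_pathMax (a b : X) :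
    {m : ℝ | ∃ L ω, IsPathW rel a b L ω ∧ m = pathMax H L ω}.Finite := by
  refine (Set.finite_range H).subset ?_
  rintro m ⟨L, ω, -, rfl⟩
  obtain ⟨i, -, h⟩ := exists_pathMax_eq (H := H) L ω
  exact ⟨ω i, h.symm⟩

lemma commH_le_pathMax {a b : X} {L : ℕ} {ω : ℕ → X} (h : IsPathW rel a b L ω) :
    commH rel H a b ≤ pathMax H L ω :=
  csInf_le (finite_setOf_pathMax a b).bddBelow ⟨L, ω, h, rfl⟩

lemma exists_commH_eq_pathMax (hconn : ConnGraph rel) (a b : X) :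
    ∃ L ω, IsPathW rel a b L ω ∧ commH rel H a b = pathMax H L ω := by
  obtain ⟨L, ω, h⟩ := hconn a b
  have hne : {m : ℝ | ∃ L ω, IsPathW rel a b L ω ∧ m = pathMax H L ω}.Nonempty :=
    ⟨_, L, ω, h, rfl⟩
  exact hne.csInf_mem (finite_setOf_pathMax a b)

lemma commH_lt_iff_connIn (hconn : ConnGraph rel) {a b : X} {t : ℝ} :
    commH rel H a b < t ↔ connIn rel {η | H η < t} a b := by
  constructor
  · intro h
    obtain ⟨L, ω, hω, heq⟩ := exists_commH_eq_pathMax (H := H) hconn a b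
    exact ⟨L, ω, hω, fun i hi => ((le_pathMax ω hi).trans_eq heq.symm).trans_lt h⟩
  · rintro ⟨L, ω, hω, hmem⟩
    obtain ⟨i, hi, heq⟩ := exists_pathMax_eq (H := H) L ω
    exact (commH_le_pathMax hω).trans_lt (heq ▸ hmem i hi)

lemma commH_comm (hsymm : Symmetric rel) (hconn : ConnGraph rel) (a b : X) :
    commH rel H a b = commH rel H b a := by
  have key : ∀ x y : X, commH rel H x y ≤ commH rel H y x := fun x y =>
    le_of_forall_gt fun t ht => by
      rw [commH_lt_iff_connIn hconn] at ht ⊢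
      exact ht.symm hsymm
  exact (key a b).antisymm (key b a)

lemma commH_le_max (hconn : ConnGraph rel) (a b c : X) :
    commH rel H a c ≤ max (commH rel H a b) (commH rel H b c) :=
  le_of_forall_gt fun t ht => by
    rw [max_lt_iff, commH_lt_iff_connIn hconn, commH_lt_iff_connIn hconn] at ht
    exact (commH_lt_iff_connIn hconn).2 (ht.1.trans ht.2)

lemma compOf_eq_setOf_commH_lt (hconn : ConnGraph rel) (a b root : X) :
    compOf rel H a b root = {η | commH rel H root η < gammaStar rel H a b} := by
  ext η
  exact (commH_lt_iff_connIn hconn).symm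

end CommunicationHeight

section Ultrametric

variable {d : X → X → ℝ}

lemma disjoint_setOf_lt_of_ultrametric (hcomm : ∀ x y, d x y = d y x)
    (hle : ∀ x y z, d x z ≤ max (d x y) (d y z)) {a b : X} {r : ℝ} (hab : d a b = r) :
    Disjoint {x | d a x < r} {x | d b x < r} := by
  refine Set.disjoint_left.2 fun x hax hbx => ?_
  have := hle a x b
  rw [hab, hcomm x b] at this
  exact this.not_gt (max_lt hax hbx)

lemma setOf_lt_eq_of_ultrametric (hcomm : ∀ x y, d x y = d y x)
    (hle : ∀ x y z, d x z ≤ max (d x y) (d y z)) {a b : X} {r : ℝ} (hab : d a b = r) :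
    {x | d a x < r} = {x | d x a < d x b ∧ d x b = r} := by
  ext x
  simp only [Set.mem_ofPred_eq]
  constructor
  · intro hax
    have hxb : d x b = r := by
      refine le_antisymm ?_ ?_
      · simpa [hcomm x a, hab, hax.le] using hle x a b
      · have := hle a x b
        rw [hab] at this
        exact (le_max_iff.1 this).resolve_left hax.not_ge
    exact ⟨by rwa [hcomm, hxb], hxb⟩
  · rintro ⟨hxa, hxb⟩
    rwa [hcomm, hxb] at hxa

end Ultrametric

theorem stmt_14_general [Fintype X] (rel : X → X → Prop) (H : X → ℝ)
    (hsymm : Symmetric rel) (hconn : ConnGraph rel)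
    (sq bx : X) (Hsq : H sq = 0) :
    Disjoint (compOf rel H sq bx sq) (compOf rel H sq bx bx) ∧
    compOf rel H sq bx sq
      = {η : X | commH rel H η sq < commH rel H η bx ∧
          commH rel H η bx = gammaStar rel H sq bx} ∧
    compOf rel H sq bx bx
      = {η : X | commH rel H η bx < commH rel H η sq ∧
          commH rel H η sq = gammaStar rel H sq bx} := by
  have hcomm := commH_comm (H := H) hsymm hconn
  have hle := commH_le_max (H := H) hconn
  have hsq_bx : commH rel H sq bx = gammaStar rel H sq bx := by
    rw [gammaStar, Hsq, sub_zero]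
  have hbx_sq : commH rel H bx sq = gammaStar rel H sq bx := hcomm bx sq ▸ hsq_bx
  simp only [compOf_eq_setOf_commH_lt hconn]
  exact ⟨disjoint_setOf_lt_of_ultrametric hcomm hle hsq_bx,
    setOf_lt_eq_of_ultrametric hcomm hle hsq_bx,
    setOf_lt_eq_of_ultrametric hcomm hle hbx_sq⟩

/-- under (H1)–(H2) and Γ* > 0, the components X_□ and X_⊞ of X**
are disjoint and X_□ = {η : Φ(η,□) < Φ(η,⊞) = Γ*},
X_⊞ = {η : Φ(η,⊞) < Φ(η,□) = Γ*}. -/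
theorem stmt_14 [Fintype X] (rel : X → X → Prop) (H : X → ℝ)
    (hsymm : Symmetric rel) (hconn : ConnGraph rel)
    (sq bx : X) (hne : sq ≠ bx) (Hsq : H sq = 0)
    -- (H1): X_stab = {⊞}
    (hH1 : {η : X | ∀ ξ, H η ≤ H ξ} = {bx})
    -- (H2): ∃ V* < Γ* with V_η ≤ V* for all η ∉ {□,⊞}
    (hH2 : ∃ Vs : ℝ, Vs < gammaStar rel H sq bx ∧
      ∀ η : X, η ≠ sq → η ≠ bx →
        ({ξ : X | H ξ < H η}).Nonempty ∧
        commHS rel H {η} {ξ : X | H ξ < H η} - H η ≤ Vs)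
    (hΓ : 0 < gammaStar rel H sq bx) :
    Disjoint (compOf rel H sq bx sq) (compOf rel H sq bx bx) ∧
    compOf rel H sq bx sq
      = {η : X | commH rel H η sq < commH rel H η bx ∧
          commH rel H η bx = gammaStar rel H sq bx} ∧
    compOf rel H sq bx bx
      = {η : X | commH rel H η bx < commH rel H η sq ∧
          commH rel H η sq = gammaStar rel H sq bx} :=
  stmt_14_general rel H hsymm hconn sq bx Hsq
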